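/- If ⟨f, {g_s}⟩ is an MDP homomorphism from M onto M', and π' : S' → A' is an optimal policy for M', then any policy π : S → A satisfying g_s(π(s)) = π'(f(s)) for all s is an optimal policy for M. -/

import Mathlib

/-!
Pulling `Q'*` back along the homomorphism, `(s, a) ↦ Q'*(f s, g_s a)`, gives a fixed point of the
Bellman operator of `M`: rewards agree, the transition kernel of `M'` is the push-forward of that of
`M` along `f`, and the maxima over actions agree because each `g_s` is onto. The Bellman operator
is a `γ`-contraction in the sup norm, so this pull-back is `Q*`. Hence
`Q*(s, π s) = Q'*(f s, π'(f s)) = max Q'*(f s, ·) = max_a Q*(s, a)`.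
-/

open Finset
open scoped Classical

/-- Bellman optimality operator for a finite MDP. -/
noncomputable def Bop {S A : Type*} [Fintype S] [Fintype A] [Nonempty A]
    (T : S → A → S → ℝ) (R : S → A → ℝ) (γ : ℝ) (Q : S → A → ℝ) : S → A → ℝ :=
  fun s a => R s a + γ * ∑ s' : S, T s a s' *
    (Finset.univ.sup' Finset.univ_nonempty (fun a' => Q s' a'))

lemma Finset.abs_sup'_sub_sup'_le {ι α : Type*} [AddCommGroup α] [LinearOrder α]
    [IsOrderedAddMonoid α] {s : Finset ι} (hs : s.Nonempty) {u v : ι → α} {c : α}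
    (h : ∀ i ∈ s, |u i - v i| ≤ c) : |s.sup' hs u - s.sup' hs v| ≤ c := by
  rw [abs_sub_le_iff, sub_le_iff_le_add, sub_le_iff_le_add]
  constructor <;> refine sup'_le _ _ fun i hi => ?_
  · exact (sub_le_iff_le_add.mp (abs_le.mp (h i hi)).2).trans
      (add_le_add_right (le_sup' v hi) c)
  · exact (sub_le_iff_le_add.mp (abs_sub_le_iff.mp (h i hi)).2).trans
      (add_le_add_right (le_sup' u hi) c)

lemma abs_sum_mul_le_of_sum_eq_one {ι α : Type*} [Fintype ι] [CommRing α] [LinearOrder α]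
    [IsOrderedRing α] {p d : ι → α} {c : α}
    (hp0 : ∀ i, 0 ≤ p i) (hp1 : ∑ i, p i = 1) (hd : ∀ i, |d i| ≤ c) :
    |∑ i, p i * d i| ≤ c :=
  calc |∑ i, p i * d i| ≤ ∑ i, p i * |d i| := by
        simpa only [abs_mul, abs_of_nonneg (hp0 _)] using
          abs_sum_le_sum_abs (fun i => p i * d i) univ
    _ ≤ ∑ i, p i * c := sum_le_sum fun i _ => mul_le_mul_of_nonneg_left (hd i) (hp0 i)
    _ = c := by rw [← sum_mul, hp1, one_mul]

lemma Finset.univ_sup'_comp_of_surjective {α β γ : Type*} [Fintype α] [Fintype β] [Nonempty α]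
    [Nonempty β] [SemilatticeSup γ] {h : α → β} (hh : Function.Surjective h) (F : β → γ) :
    univ.sup' univ_nonempty (F ∘ h) = univ.sup' univ_nonempty F := by
  simp only [sup'_comp_eq_image, image_univ_of_surjective hh]

lemma Finset.sum_mul_comp_eq_sum_fiberwise {S S' α : Type*} [Fintype S] [Fintype S']
    [NonUnitalNonAssocSemiring α] (f : S → S') (p : S → α) (V : S' → α) :
    ∑ x, p x * V (f x) = ∑ t, (∑ x ∈ univ.filter (fun x => f x = t), p x) * V t := by
  rw [← sum_fiberwise univ f (fun x => p x * V (f x))]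
  refine sum_congr rfl fun t _ => ?_
  rw [sum_mul]
  exact sum_congr rfl fun x hx => by rw [(mem_filter.mp hx).2]

section Bellman

variable {S A : Type*} [Fintype S] [Fintype A] [Nonempty A]
  {T : S → A → S → ℝ} {R : S → A → ℝ} {γ : ℝ}

lemma dist_Bop_le (hγ0 : 0 ≤ γ) (hTnn : ∀ s a s', 0 ≤ T s a s')
    (hTsum : ∀ s a, ∑ s', T s a s' = 1) (Q₁ Q₂ : S → A → ℝ) :
    dist (Bop T R γ Q₁) (Bop T R γ Q₂) ≤ γ * dist Q₁ Q₂ := by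
  have hV : ∀ s', |univ.sup' univ_nonempty (Q₁ s') - univ.sup' univ_nonempty (Q₂ s')|
      ≤ dist Q₁ Q₂ := fun s' => abs_sup'_sub_sup'_le _ fun a _ =>
    (Real.dist_eq _ _).symm.trans_le
      ((dist_le_pi_dist _ _ a).trans (dist_le_pi_dist Q₁ Q₂ s'))
  refine (dist_pi_le_iff (by positivity)).2 fun s =>
    (dist_pi_le_iff (by positivity)).2 fun a => ?_
  calc dist (Bop T R γ Q₁ s a) (Bop T R γ Q₂ s a)
      = γ * |∑ s', T s a s' *
          (univ.sup' univ_nonempty (Q₁ s') - univ.sup' univ_nonempty (Q₂ s'))| := by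
        simp only [Bop, Real.dist_eq, add_sub_add_left_eq_sub, ← mul_sub, ← sum_sub_distrib,
          abs_mul, abs_of_nonneg hγ0]
    _ ≤ γ * dist Q₁ Q₂ := by gcongr; exact abs_sum_mul_le_of_sum_eq_one (hTnn s a) (hTsum s a) hV

lemma eq_of_Bop_eq_self (hγ0 : 0 ≤ γ) (hγ1 : γ < 1) (hTnn : ∀ s a s', 0 ≤ T s a s')
    (hTsum : ∀ s a, ∑ s', T s a s' = 1) {Q₁ Q₂ : S → A → ℝ}
    (h₁ : Bop T R γ Q₁ = Q₁) (h₂ : Bop T R γ Q₂ = Q₂) : Q₁ = Q₂ := by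
  have hcontr : ContractingWith ⟨γ, hγ0⟩ (Bop T R γ) :=
    ⟨hγ1, LipschitzWith.of_dist_le_mul (dist_Bop_le hγ0 hTnn hTsum)⟩
  exact hcontr.fixedPoint_unique' h₁ h₂

end Bellman

lemma Bop_comp_homomorphism {S A S' A' : Type*} [Fintype S] [Fintype A] [Fintype S']
    [Fintype A'] [Nonempty A] [Nonempty A'] {T : S → A → S → ℝ} {R : S → A → ℝ}
    {T' : S' → A' → S' → ℝ} {R' : S' → A' → ℝ} {γ : ℝ} {f : S → S'} {g : S → A → A'}
    (hgsurj : ∀ s, Function.Surjective (g s))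
    (hT : ∀ s a s', T' (f s) (g s a) s' = ∑ x ∈ univ.filter (fun x => f x = s'), T s a x)
    (hR : ∀ s a, R' (f s) (g s a) = R s a) (Q' : S' → A' → ℝ) :
    Bop T R γ (fun s a => Q' (f s) (g s a)) = fun s a => Bop T' R' γ Q' (f s) (g s a) := by
  funext s a
  have hV : ∀ x, univ.sup' univ_nonempty (fun a' => Q' (f x) (g x a')) =
      univ.sup' univ_nonempty (Q' (f x)) :=
    fun x => univ_sup'_comp_of_surjective (hgsurj x) (Q' (f x))
  simp only [Bop, hR, hT, hV]
  rw [sum_mul_comp_eq_sum_fiberwise f (T s a) (fun t => univ.sup' univ_nonempty (Q' t))]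

theorem lifted_policy_optimal_general
    {S A S' A' : Type*} [Fintype S] [Fintype A] [Fintype S'] [Fintype A']
    [Nonempty A] [Nonempty A']
    (T : S → A → S → ℝ) (R : S → A → ℝ)
    (T' : S' → A' → S' → ℝ) (R' : S' → A' → ℝ)
    (γ : ℝ) (hγ0 : 0 ≤ γ) (hγ1 : γ < 1)
    (hTnn : ∀ s a s'', 0 ≤ T s a s'') (hTsum : ∀ s a, ∑ s'' : S, T s a s'' = 1)
    (f : S → S') (g : S → A → A')
    (hgsurj : ∀ s, Function.Surjective (g s))
    (hT : ∀ s a s', T' (f s) (g s a) s' = ∑ x ∈ Finset.univ.filter (fun x => f x = s'), T s a x)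
    (hR : ∀ s a, R' (f s) (g s a) = R s a)
    (Qstar : S → A → ℝ) (hQstar : Bop T R γ Qstar = Qstar)
    (Q'star : S' → A' → ℝ) (hQ'star : Bop T' R' γ Q'star = Q'star)
    (π' : S' → A')
    (hπ'opt : ∀ s', Q'star s' (π' s') =
      Finset.univ.sup' Finset.univ_nonempty (fun a' => Q'star s' a'))
    (π : S → A) (hlift : ∀ s, g s (π s) = π' (f s)) :
    ∀ s, Qstar s (π s) = Finset.univ.sup' Finset.univ_nonempty (fun a => Qstar s a) := by
  have hfixed :
      Bop T R γ (fun s a => Q'star (f s) (g s a)) = fun s a => Q'star (f s) (g s a) := by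
    rw [Bop_comp_homomorphism hgsurj hT hR, hQ'star]
  have hQstar_eq : Qstar = fun s a => Q'star (f s) (g s a) :=
    eq_of_Bop_eq_self hγ0 hγ1 hTnn hTsum hQstar hfixed
  intro s
  subst hQstar_eq
  calc Q'star (f s) (g s (π s)) = Q'star (f s) (π' (f s)) := by rw [hlift]
    _ = univ.sup' univ_nonempty (Q'star (f s)) := hπ'opt (f s)
    _ = univ.sup' univ_nonempty (Q'star (f s) ∘ g s) :=
      (univ_sup'_comp_of_surjective (hgsurj s) (Q'star (f s))).symm

/-- An optimal policy for the abstract MDP lifts through an MDP homomorphism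
to an optimal policy for the underlying MDP. -/
theorem lifted_policy_optimal
    {S A S' A' : Type*} [Fintype S] [Fintype A] [Fintype S'] [Fintype A']
    [Nonempty S] [Nonempty A] [Nonempty S'] [Nonempty A']
    (T : S → A → S → ℝ) (R : S → A → ℝ)
    (T' : S' → A' → S' → ℝ) (R' : S' → A' → ℝ)
    (γ : ℝ) (hγ0 : 0 ≤ γ) (hγ1 : γ < 1)
    (hTnn : ∀ s a s'', 0 ≤ T s a s'') (hTsum : ∀ s a, ∑ s'' : S, T s a s'' = 1)
    (hT'nn : ∀ s a s'', 0 ≤ T' s a s'') (hT'sum : ∀ s a, ∑ s'' : S', T' s a s'' = 1)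
    (f : S → S') (g : S → A → A')
    (hfsurj : Function.Surjective f) (hgsurj : ∀ s, Function.Surjective (g s))
    (hT : ∀ s a s', T' (f s) (g s a) s' = ∑ x ∈ Finset.univ.filter (fun x => f x = s'), T s a x)
    (hR : ∀ s a, R' (f s) (g s a) = R s a)
    (Qstar : S → A → ℝ) (hQstar : Bop T R γ Qstar = Qstar)
    (Q'star : S' → A' → ℝ) (hQ'star : Bop T' R' γ Q'star = Q'star)
    (π' : S' → A')
    (hπ'opt : ∀ s', Q'star s' (π' s') =
      Finset.univ.sup' Finset.univ_nonempty (fun a' => Q'star s' a'))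
    (π : S → A) (hlift : ∀ s, g s (π s) = π' (f s)) :
    ∀ s, Qstar s (π s) = Finset.univ.sup' Finset.univ_nonempty (fun a => Qstar s a) :=
  lifted_policy_optimal_general T R T' R' γ hγ0 hγ1 hTnn hTsum f g hgsurj hT hR Qstar hQstar Q'star
    hQ'star π' hπ'opt π hlift
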